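/- arXiv:math/0701701 — 2 statements merged into one kernel-verified Lean document; each statement's English description precedes it below -/
import Mathlib

section
/- For r > 1 and λ a primitive element of GF(2^r), the group SL(2,2^r) is generated by the matrices D1 = [[1,1],[1,0]] and D2 = [[λ,0],[0,λ^{-1}]]. -/
open Matrix Matrix.SpecialLinearGroup
open scoped MatrixGroups

/-!
Conjugation by `diag(a, a⁻¹)` multiplies the parameter of an upper (lower) transvection by `a²`
(by `a⁻²`). Since `λ` generates `Fˣ`, the closure contains every such diagonal matrix, and in a
finite field of characteristic two every element is a square; so one upper and one lower
transvection with nonzero parameter already give all transvections, which generate `SL(2, F)`.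
In characteristic two `D₁ = [[1, 0], [1, 1]] · [[1, 1], [0, 1]]`, and `D₁ D₂ D₁⁻¹ D₂` is the upper
transvection with parameter `(1 + λ⁻¹)²`, which is nonzero because `λ ≠ 1` once `|F| > 2`.
-/

namespace Matrix.SpecialLinearGroup

variable {F : Type*} [Field F]

noncomputable def diag2Hom : Fˣ →* SL(2, F) where
  toFun a := diag2 a a.ne_zero
  map_one' := Subtype.ext <| by simp [diag2_coe', one_fin_two]
  map_mul' a b := Subtype.ext <| by simp [diag2_coe', mul_comm]

lemma transvection_zero_one_coe (b : F) :
    ((transvection zero_ne_one b : SL(2, F)) : Matrix (Fin 2) (Fin 2) F) = !![1, b; 0, 1] := by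
  ext i j; fin_cases i <;> fin_cases j <;> simp [transvection_coe]

lemma transvection_one_zero_coe (b : F) :
    ((transvection one_ne_zero b : SL(2, F)) : Matrix (Fin 2) (Fin 2) F) = !![1, 0; b, 1] := by
  ext i j; fin_cases i <;> fin_cases j <;> simp [transvection_coe]

lemma diag2_mul_transvection_mul_inv_zero_one (a b : F) (ha : a ≠ 0) :
    diag2 a ha * transvection zero_ne_one b * (diag2 a ha)⁻¹ =
      transvection zero_ne_one (a ^ 2 * b) := by
  rw [diag2_inv]
  refine Subtype.ext ?_
  simp only [coe_mul, diag2_coe', transvection_zero_one_coe, mul_fin_two]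
  ext i j
  fin_cases i <;> fin_cases j <;> simp <;> field_simp

lemma diag2_mul_transvection_mul_inv_one_zero (a b : F) (ha : a ≠ 0) :
    diag2 a ha * transvection one_ne_zero b * (diag2 a ha)⁻¹ =
      transvection one_ne_zero (b / a ^ 2) := by
  rw [diag2_inv]
  refine Subtype.ext ?_
  simp only [coe_mul, diag2_coe', transvection_one_zero_coe, mul_fin_two]
  ext i j
  fin_cases i <;> fin_cases j <;> simp <;> field_simp

lemma SL2.eq_top_of_transvection_mem {H : Subgroup SL(2, F)}
    (h01 : ∀ b, transvection zero_ne_one b ∈ H) (h10 : ∀ b, transvection one_ne_zero b ∈ H) :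
    H = ⊤ :=
  Subgroup.eq_top_iff' H |>.2 <| SL2.transvection_induction (· ∈ H)
    (fun i j hij b ↦ by
      fin_cases i <;> fin_cases j <;> first | exact absurd rfl hij | simp_all)
    (fun _ _ ↦ mul_mem)

lemma transvection_zero_one_mem_of_isSquare {H : Subgroup SL(2, F)} (hdiag : diag2Hom.range ≤ H)
    (hsq : ∀ x : F, IsSquare x) {c : F} (hc : c ≠ 0) (hmem : transvection zero_ne_one c ∈ H)
    (b : F) : transvection zero_ne_one b ∈ H := by
  rcases eq_or_ne b 0 with rfl | hb
  · simp
  obtain ⟨a, hab⟩ := hsq (b / c)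
  have ha : a ≠ 0 := by rintro rfl; simp_all
  have hD : diag2 a ha ∈ H := hdiag ⟨Units.mk0 a ha, rfl⟩
  rw [show b = a ^ 2 * c by rw [sq, ← hab, div_mul_cancel₀ _ hc],
    ← diag2_mul_transvection_mul_inv_zero_one a c ha]
  exact H.mul_mem (H.mul_mem hD hmem) (H.inv_mem hD)

lemma transvection_one_zero_mem_of_isSquare {H : Subgroup SL(2, F)} (hdiag : diag2Hom.range ≤ H)
    (hsq : ∀ x : F, IsSquare x) {c : F} (hc : c ≠ 0) (hmem : transvection one_ne_zero c ∈ H)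
    (b : F) : transvection one_ne_zero b ∈ H := by
  rcases eq_or_ne b 0 with rfl | hb
  · simp
  obtain ⟨a, hab⟩ := hsq (c / b)
  have ha : a ≠ 0 := by rintro rfl; simp_all
  have hD : diag2 a ha ∈ H := hdiag ⟨Units.mk0 a ha, rfl⟩
  rw [show b = c / a ^ 2 by rw [sq, ← hab, div_div_cancel₀ hc],
    ← diag2_mul_transvection_mul_inv_one_zero a c ha]
  exact H.mul_mem (H.mul_mem hD hmem) (H.inv_mem hD)

section CharTwo

variable [CharP F 2]

-- The matrix `D₁` of the statement (the Fibonacci matrix).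
def SL2.fibonacci : SL(2, F) :=
  ⟨!![1, 1; 1, 0], by simp [det_fin_two_of, CharTwo.neg_eq]⟩

lemma SL2.coe_fibonacci :
    ((SL2.fibonacci : SL(2, F)) : Matrix (Fin 2) (Fin 2) F) = !![1, 1; 1, 0] := rfl

lemma SL2.fibonacci_eq_mul :
    SL2.fibonacci = transvection one_ne_zero (1 : F) * transvection zero_ne_one 1 := by
  refine Subtype.ext ?_
  simp [SL2.coe_fibonacci, transvection_zero_one_coe, transvection_one_zero_coe,
    CharTwo.add_self_eq_zero]

lemma SL2.fibonacci_mul_diag2_mul_inv_mul_diag2 (a : F) (ha : a ≠ 0) :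
    SL2.fibonacci * diag2 a ha * SL2.fibonacci⁻¹ * diag2 a ha =
      transvection zero_ne_one ((1 + a⁻¹) ^ 2) := by
  refine Subtype.ext ?_
  simp only [coe_mul, coe_inv, SL2.coe_fibonacci, diag2_coe', transvection_zero_one_coe,
    adjugate_fin_two_of, mul_fin_two]
  ext i j
  fin_cases i <;> fin_cases j <;> simp [CharTwo.neg_eq, CharTwo.add_sq] <;> field_simp

theorem SL2.closure_fibonacci_diag2Hom_eq_top [Finite F] {l : Fˣ} (hl1 : l ≠ 1)
    (hl : ∀ x : Fˣ, x ∈ Subgroup.zpowers l) :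
    Subgroup.closure {SL2.fibonacci, diag2Hom l} = ⊤ := by
  set H := Subgroup.closure {SL2.fibonacci, diag2Hom l}
  have hfib : SL2.fibonacci ∈ H := Subgroup.subset_closure (Set.mem_insert _ _)
  have hdiag : diag2Hom.range ≤ H := by
    rintro _ ⟨a, rfl⟩
    obtain ⟨k, rfl⟩ := Subgroup.mem_zpowers_iff.1 (hl a)
    rw [map_zpow]
    exact zpow_mem (Subgroup.subset_closure (Set.mem_insert_of_mem _ (Set.mem_singleton _))) k
  have hsq : ∀ x : F, IsSquare x := isSquare_of_charTwo'
  have hc : (1 + (l : F)⁻¹) ^ 2 ≠ 0 := by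
    refine pow_ne_zero 2 fun h ↦ hl1 (Units.val_eq_one.1 ?_)
    rwa [CharTwo.add_eq_zero, eq_comm, inv_eq_one] at h
  have hupper : ∀ b, transvection zero_ne_one b ∈ H := by
    refine transvection_zero_one_mem_of_isSquare hdiag hsq hc ?_
    rw [← SL2.fibonacci_mul_diag2_mul_inv_mul_diag2 _ l.ne_zero]
    have hD : diag2 (l : F) l.ne_zero ∈ H := hdiag ⟨l, rfl⟩
    exact H.mul_mem (H.mul_mem (H.mul_mem hfib hD) (H.inv_mem hfib)) hD
  refine SL2.eq_top_of_transvection_mem hupper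
    (transvection_one_zero_mem_of_isSquare hdiag hsq one_ne_zero ?_)
  rw [← mul_inv_eq_of_eq_mul SL2.fibonacci_eq_mul]
  exact H.mul_mem hfib (H.inv_mem (hupper 1))

end CharTwo

end Matrix.SpecialLinearGroup

/-- For `r > 1` and `λ` a primitive element of `GF(2^r)`, the group
`SL(2,2^r)` is generated by `D1 = [[1,1],[1,0]]` and `D2 = [[λ,0],[0,λ⁻¹]]`.
(The field `GF(2^r)` has characteristic 2.) -/
theorem sl2_char_two_generators (F : Type*) [Field F] [Fintype F] [CharP F 2]
    (r : ℕ) (hr : 1 < r) (hcard : Fintype.card F = 2 ^ r)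
    (l : Fˣ) (hl : ∀ x : Fˣ, x ∈ Subgroup.zpowers l) :
    Subgroup.closure
      ({⟨!![1, 1; 1, 0], by
          simp [Matrix.det_fin_two_of, CharTwo.neg_eq (1 : F)]⟩,
        ⟨!![(l : F), 0; 0, (l : F)⁻¹],
          by simp [Matrix.det_fin_two_of, mul_inv_cancel₀ l.ne_zero]⟩} :
        Set (Matrix.SpecialLinearGroup (Fin 2) F)) = ⊤ := by
  have hl1 : l ≠ 1 := by
    have : Nontrivial Fˣ := Finite.one_lt_card_iff_nontrivial.1 <| by
      rw [Nat.card_units, Nat.card_eq_fintype_card, hcard]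
      have := Nat.pow_le_pow_right two_pos hr
      omega
    obtain ⟨x, hx⟩ := exists_ne (1 : Fˣ)
    rintro rfl
    simp_all
  convert SL2.closure_fibonacci_diag2Hom_eq_top hl1 hl using 2
  congr 2
  exact Subtype.ext (diag2_coe' l.ne_zero).symm
end

section
/- The Zorn vector matrix multiplication over any field satisfies the Moufang identity x(y(xz)) = ((xy)x)z for all Zorn matrices x, y, z (equivalently, for all determinant-1 Zorn matrices). -/
open Matrix

/-- A Zorn vector matrix `(a, α; β, b)` over a field `F`. -/
structure ZornMatrix (F : Type*) [Field F] where
  a : F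
  α : Fin 3 → F
  β : Fin 3 → F
  b : F

variable {F : Type*} [Field F]

/-- Zorn vector matrix multiplication. -/
def ZornMatrix.mul (M N : ZornMatrix F) : ZornMatrix F :=
  ⟨M.a * N.a + M.α ⬝ᵥ N.β,
   M.a • N.α + N.b • M.α - crossProduct M.β N.β,
   N.a • M.β + M.b • N.β + crossProduct M.α N.α,
   M.β ⬝ᵥ N.α + M.b * N.b⟩

/-- The determinant of a Zorn matrix. -/
def ZornMatrix.det (M : ZornMatrix F) : F := M.a * M.b - M.α ⬝ᵥ M.β

set_option maxHeartbeats 2000000 in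
/-- The Zorn multiplication satisfies the Moufang identity
`x(y(xz)) = ((xy)x)z`. -/
theorem ZornMatrix.moufang (x y z : ZornMatrix F) :
    x.mul (y.mul (x.mul z)) = ((x.mul y).mul x).mul z := by
  obtain ⟨a1, α1, β1, b1⟩ := x
  obtain ⟨a2, α2, β2, b2⟩ := y
  obtain ⟨a3, α3, β3, b3⟩ := z
  simp only [ZornMatrix.mul, crossProduct, dotProduct, Fin.sum_univ_three,
    LinearMap.mk₂_apply, Pi.add_apply, Pi.sub_apply, Pi.smul_apply, smul_eq_mul,
    cons_val_zero, cons_val_one, head_cons, cons_val_two, tail_cons, ZornMatrix.mk.injEq]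
  refine ⟨by ring, funext fun i => ?_, funext fun i => ?_, by ring⟩ <;>
    fin_cases i <;>
    simp [vecHead, vecTail, Pi.add_apply, Pi.sub_apply, Pi.smul_apply, smul_eq_mul] <;> ring
end
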